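/- arXiv:math/0307223 — 2 statements merged into one kernel-verified Lean document; each statement's English description precedes it below -/
import Mathlib

section
/- Let $S = K[x_1,\ldots,x_n]$ and let $I$ be a stable monomial ideal. Then for every $j$, the number of monomials in $S_1 \cdot I_j$ divisible by $x_n$ equals the number of monomials in $I_j$, i.e., $m_n(S_1 I_j) = H(I, j)$, where $m_n(V)$ counts the monomials in $V$ with maximal variable $x_n$. -/
open MvPolynomial

variable {K : Type*} [Field K] {n : ℕ}

/-- The total degree of an exponent vector. -/
def mdeg {n : ℕ} (m : Fin n →₀ ℕ) : ℕ := m.sum fun _ e => e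

/-- `I` is a monomial ideal: it contains every monomial of each of its elements. -/
def IsMonomialIdeal (I : Ideal (MvPolynomial (Fin n) K)) : Prop :=
  ∀ f ∈ I, ∀ m ∈ f.support, (monomial m (1 : K)) ∈ I

/-- `I` is stable: for every monomial `u ∈ I` with largest dividing variable `x_k`,
and every `i ≤ k`, the monomial `(x_i / x_k) * u` lies in `I`. -/
def IsStableIdeal (I : Ideal (MvPolynomial (Fin n) K)) : Prop :=
  ∀ m : Fin n →₀ ℕ, (monomial m (1 : K)) ∈ I →
    ∀ k i : Fin n, m k ≠ 0 → (∀ k', k < k' → m k' = 0) → i ≤ k →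
      (monomial (m + Finsupp.single i 1 - Finsupp.single k 1) (1 : K)) ∈ I

/-- `I` is strongly stable: for every monomial `u ∈ I`, every variable `x_k` dividing `u`
and every `i ≤ k`, the monomial `(x_i / x_k) * u` lies in `I`. -/
def IsStronglyStableIdeal (I : Ideal (MvPolynomial (Fin n) K)) : Prop :=
  ∀ m : Fin n →₀ ℕ, (monomial m (1 : K)) ∈ I →
    ∀ k i : Fin n, m k ≠ 0 → i ≤ k →
      (monomial (m + Finsupp.single i 1 - Finsupp.single k 1) (1 : K)) ∈ I

/-- `v <_lex u` for exponent vectors, lex order with `x_1 > x_2 > ⋯ > x_n`. -/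
def lexLt {n : ℕ} (v u : Fin n →₀ ℕ) : Prop :=
  ∃ i : Fin n, (∀ j < i, v j = u j) ∧ v i < u i

/-- `I` is a lexsegment ideal. -/
def IsLexsegmentIdeal (I : Ideal (MvPolynomial (Fin n) K)) : Prop :=
  IsMonomialIdeal I ∧
    ∀ u v : Fin n →₀ ℕ, (monomial u (1 : K)) ∈ I → mdeg v = mdeg u → lexLt u v →
      (monomial v (1 : K)) ∈ I

/-- The degree `j` piece of `S/I`, as the image of the degree `j` homogeneous polynomials. -/
noncomputable def Qpiece (I : Ideal (MvPolynomial (Fin n) K)) (j : ℕ) :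
    Submodule K (MvPolynomial (Fin n) K ⧸ I) :=
  (homogeneousSubmodule (Fin n) K j).map (Ideal.Quotient.mkₐ K I).toLinearMap

/-- Multiplication by `g` maps `(S/I)_j` injectively (to `(S/I)_{j'}`). -/
def QInj (I : Ideal (MvPolynomial (Fin n) K)) (g : MvPolynomial (Fin n) K)
    (j _j' : ℕ) : Prop :=
  ∀ f₁ ∈ Qpiece I j, ∀ f₂ ∈ Qpiece I j,
    Ideal.Quotient.mk I g * f₁ = Ideal.Quotient.mk I g * f₂ → f₁ = f₂

/-- Multiplication by `g` maps `(S/I)_j` onto `(S/I)_{j'}`. -/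
def QSurj (I : Ideal (MvPolynomial (Fin n) K)) (g : MvPolynomial (Fin n) K)
    (j j' : ℕ) : Prop :=
  ∀ h ∈ Qpiece I j', ∃ f ∈ Qpiece I j, Ideal.Quotient.mk I g * f = h

/-- Multiplication by `g` from `(S/I)_j` to `(S/I)_{j'}` has maximal rank. -/
def MulMaxRank (I : Ideal (MvPolynomial (Fin n) K)) (g : MvPolynomial (Fin n) K)
    (j j' : ℕ) : Prop :=
  QInj I g j j' ∨ QSurj I g j j'


lemma finsupp_sub_add {n : ℕ} (f : Fin n →₀ ℕ) (i : Fin n) (h : f i ≠ 0) :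
    f - Finsupp.single i 1 + Finsupp.single i 1 = f := by
  ext k
  simp only [Finsupp.add_apply, Finsupp.tsub_apply, Finsupp.single_apply]
  by_cases hk : i = k
  · subst hk; simp; omega
  · simp [hk]

lemma mdeg_add {n : ℕ} (a b : Fin n →₀ ℕ) : mdeg (a + b) = mdeg a + mdeg b := by
  unfold mdeg; rw [Finsupp.sum_add_index] <;> simp

lemma mdeg_single {n : ℕ} (i : Fin n) : mdeg (Finsupp.single i 1) = 1 := by
  unfold mdeg; simp [Finsupp.sum_single_index]

/-- For a stable monomial ideal `I`, the number of monomials in `S_1 I_j` divisible by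
`x_n` equals the number of monomials in `I_j`, i.e. `m_n(S_1 I_j) = H(I,j)`. -/
theorem stmt_9 (hn : 1 ≤ n) (I : Ideal (MvPolynomial (Fin n) K))
    (hmon : IsMonomialIdeal I) (hst : IsStableIdeal I) (j : ℕ) :
    Nat.card {m : Fin n →₀ ℕ // mdeg m = j + 1 ∧ m ⟨n - 1, by omega⟩ ≠ 0 ∧
        ∃ i : Fin n, m i ≠ 0 ∧ monomial (m - Finsupp.single i 1) (1 : K) ∈ I} =
      Nat.card {m : Fin n →₀ ℕ // mdeg m = j ∧ monomial m (1 : K) ∈ I} := by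
  set l : Fin n := ⟨n - 1, by omega⟩ with hl
  have hle : ∀ i : Fin n, i ≤ l := fun i => by
    have := i.isLt; simp only [hl, Fin.le_def]; omega
  have key : ∀ (m : Fin n →₀ ℕ), m l ≠ 0 →
      (∃ i : Fin n, m i ≠ 0 ∧ monomial (m - Finsupp.single i 1) (1 : K) ∈ I) →
      monomial (m - Finsupp.single l 1) (1 : K) ∈ I := by
    rintro m hml ⟨i, hi, hIi⟩
    by_cases hil : i = l
    · rwa [hil] at hIi
    · have hul : (m - Finsupp.single i 1 : Fin n →₀ ℕ) l ≠ 0 := by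
        simpa [Finsupp.tsub_apply, Finsupp.single_apply, hil] using hml
      have h2 := hst _ hIi l i hul
        (fun k' hk' => absurd hk' (not_lt.mpr (hle k'))) (hle i)
      rwa [finsupp_sub_add m i hi] at h2
  refine Nat.card_congr ⟨fun x => ⟨x.1 - Finsupp.single l 1, ?_, ?_⟩,
    fun y => ⟨y.1 + Finsupp.single l 1, ?_, ?_, l, ?_, ?_⟩, ?_, ?_⟩
  · have h := congrArg mdeg (finsupp_sub_add x.1 l x.2.2.1)
    rw [mdeg_add, mdeg_single, x.2.1] at h
    omega
  · exact key x.1 x.2.2.1 x.2.2.2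
  · rw [mdeg_add, mdeg_single, y.2.1]
  · simp
  · simp
  · rw [add_tsub_cancel_right]; exact y.2.2
  · intro x; exact Subtype.ext (finsupp_sub_add x.1 l x.2.2.1)
  · intro y; exact Subtype.ext (add_tsub_cancel_right _ _)
end

section
/- Let $K$ be a field and $S = K[x,y,z]$ with the strongly stable ideal $I' = (x^2, xy, y^3, xz^2, y^2z^2, yz^3, z^4)$. Then $z$ is not a strong Lefschetz element on $S/I'$: the multiplication map $(S/I')_1 \to (S/I')_3$, $f \mapsto z^2 f$, kills the nonzero class of $x$, and since $\dim_K (S/I')_1 = 3 = \dim_K (S/I')_3$, this map is neither injective nor surjective. -/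
open MvPolynomial

variable {K : Type*} [Field K] {n : ℕ}

/-! The ideal is generated by monomials, so a polynomial lies in `I'` exactly when each monomial
of its support is divisible by a generator. Hence the classes of the standard monomials (those
outside `I'`) of degree `j` form a basis of `(S/I')_j`: `x, y, z` in degree 1 and `y²z, yz², z³`
in degree 3. The generator `xz²` makes `z² · x = 0` while `x ∉ I'`, so multiplication by `z²`
is not injective, and by rank–nullity a surjection between spaces of the same dimension would
be injective. -/

section MonomialIdeal

variable {σ : Type*} {s : Set (σ →₀ ℕ)}

lemma monomial_mem_span_monomial_iff {m : σ →₀ ℕ} :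
    monomial m (1 : K) ∈ Ideal.span ((fun si => monomial si (1 : K)) '' s) ↔ ∃ si ∈ s, si ≤ m := by
  classical
  simp [mem_ideal_span_monomial_image, support_monomial]

lemma linearIndependent_mk_monomial_of_forall_not_le :
    LinearIndependent K fun m : {m : σ →₀ ℕ // ∀ si ∈ s, ¬ si ≤ m} =>
      Ideal.Quotient.mk (Ideal.span ((fun si => monomial si (1 : K)) '' s)) (monomial m.1 1) := by
  classical
  rw [linearIndependent_iff']
  intro t c hc m hm
  set p : MvPolynomial σ K := ∑ i ∈ t, monomial i.1 (c i)
  have hp : p ∈ Ideal.span ((fun si => monomial si (1 : K)) '' s) := by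
    rw [← Ideal.Quotient.eq_zero_iff_mem, ← hc, map_sum]
    refine Finset.sum_congr rfl fun i _ => ?_
    rw [← Ideal.Quotient.mkₐ_eq_mk K, ← map_smul, smul_monomial, smul_eq_mul, mul_one]
  have hcoeff : coeff m.1 p = c m := by
    simp [p, coeff_sum, coeff_monomial, Subtype.val_inj, hm]
  by_contra hcm
  obtain ⟨si, hsi, hle⟩ := mem_ideal_span_monomial_image.mp hp m.1
    (mem_support_iff.mpr (hcoeff ▸ hcm))
  exact m.2 si hsi hle

end MonomialIdeal

section Qpiece

instance (I : Ideal (MvPolynomial (Fin n) K)) (j : ℕ) : FiniteDimensional K (Qpiece I j) :=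
  Module.Finite.iff_fg.mpr ((homogeneousSubmodule_fg (Fin n) K j).map _)

lemma mk_mem_qpiece {I : Ideal (MvPolynomial (Fin n) K)} {j : ℕ} {p : MvPolynomial (Fin n) K}
    (hp : p.IsHomogeneous j) : Ideal.Quotient.mk I p ∈ Qpiece I j :=
  ⟨p, hp, rfl⟩

lemma qpiece_eq_span (I : Ideal (MvPolynomial (Fin n) K)) (j : ℕ) :
    Qpiece I j = Submodule.span K
      ((fun m => Ideal.Quotient.mk I (monomial m (1 : K))) '' {m | m.degree = j}) := by
  rw [Qpiece, homogeneousSubmodule_eq_finsupp_supported, AddMonoidAlgebra.supported_eq_span_single,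
    Submodule.map_span, Set.image_image]
  rfl

lemma finrank_qpiece_span_monomial {s : Set (Fin n →₀ ℕ)} {j : ℕ} (T : Finset (Fin n →₀ ℕ))
    (hT : ∀ m, m ∈ T ↔ m.degree = j ∧ ∀ si ∈ s, ¬ si ≤ m) :
    Module.finrank K (Qpiece (Ideal.span ((fun si => monomial si (1 : K)) '' s)) j) = T.card := by
  set I := Ideal.span ((fun si => monomial si (1 : K)) '' s)
  let v : T → MvPolynomial (Fin n) K ⧸ I := fun m => Ideal.Quotient.mk I (monomial m.1 1)
  have hv : LinearIndependent K v :=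
    linearIndependent_mk_monomial_of_forall_not_le.comp (fun m : T => ⟨m.1, ((hT m).1 m.2).2⟩)
      fun m m' h => Subtype.ext (congrArg Subtype.val h :)
  have hspan : Qpiece I j = Submodule.span K (Set.range v) := by
    apply le_antisymm
    · rw [qpiece_eq_span, Submodule.span_le]
      rintro _ ⟨m, hm, rfl⟩
      by_cases hs : ∃ si ∈ s, si ≤ m
      · show Ideal.Quotient.mk I (monomial m 1) ∈ _
        rw [Ideal.Quotient.eq_zero_iff_mem.mpr (monomial_mem_span_monomial_iff.mpr hs)]
        exact Submodule.zero_mem _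
      · push Not at hs
        exact Submodule.subset_span ⟨⟨m, (hT m).2 ⟨hm, hs⟩⟩, rfl⟩
    · rw [Submodule.span_le]
      rintro _ ⟨m, rfl⟩
      exact mk_mem_qpiece (isHomogeneous_monomial _ ((hT m).1 m.2).1)
  rw [hspan, finrank_span_eq_card hv, Fintype.card_coe]

lemma not_qInj_of_mul_eq_zero {I : Ideal (MvPolynomial (Fin n) K)} {g : MvPolynomial (Fin n) K}
    {j j' : ℕ} {a : MvPolynomial (Fin n) K ⧸ I} (ha : a ∈ Qpiece I j) (ha0 : a ≠ 0)
    (hga : Ideal.Quotient.mk I g * a = 0) : ¬ QInj I g j j' := fun hinj =>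
  ha0 (hinj a ha 0 (Qpiece I j).zero_mem (by rw [hga, mul_zero]))

lemma qInj_of_qSurj {I : Ideal (MvPolynomial (Fin n) K)} {g : MvPolynomial (Fin n) K}
    {j j' : ℕ} (hdim : Module.finrank K (Qpiece I j') = Module.finrank K (Qpiece I j))
    (hsurj : QSurj I g j j') : QInj I g j j' := by
  set L := (LinearMap.mulLeft K (Ideal.Quotient.mk I g)).domRestrict (Qpiece I j)
  have hrange : Qpiece I j' ≤ LinearMap.range L := fun h hh => by
    obtain ⟨f, hf, rfl⟩ := hsurj h hh
    exact ⟨⟨f, hf⟩, rfl⟩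
  have hker : LinearMap.ker L = ⊥ := by
    have := L.finrank_range_add_finrank_ker
    have := Submodule.finrank_mono hrange
    exact Submodule.finrank_eq_zero.mp (by omega)
  intro f₁ hf₁ f₂ hf₂ h
  exact congrArg Subtype.val (LinearMap.ker_eq_bot.mp hker (a₁ := ⟨f₁, hf₁⟩) (a₂ := ⟨f₂, hf₂⟩) h)

end Qpiece

section GeneratorExponents

open Finsupp

def generatorExponents : Set (Fin 3 →₀ ℕ) :=
  {single 0 2, single 0 1 + single 1 1, single 1 3, single 0 1 + single 2 2,
    single 1 2 + single 2 2, single 1 1 + single 2 3, single 2 4}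

lemma span_eq_span_monomial_generatorExponents :
    Ideal.span {(X 0 : MvPolynomial (Fin 3) K) ^ 2, X 0 * X 1, X 1 ^ 3,
        X 0 * X 2 ^ 2, X 1 ^ 2 * X 2 ^ 2, X 1 * X 2 ^ 3, X 2 ^ 4} =
      Ideal.span ((fun si => monomial si (1 : K)) '' generatorExponents) := by
  simp only [generatorExponents, Set.image_insert_eq, Set.image_singleton, X_pow_eq_monomial]
  simp only [X, monomial_mul, one_mul]

lemma finrank_qpiece_one_generatorExponents :
    Module.finrank K
      (Qpiece (Ideal.span ((fun si => monomial si (1 : K)) '' generatorExponents)) 1) = 3 := by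
  rw [finrank_qpiece_span_monomial {single 0 1, single 1 1, single 2 1} fun m => ?_]
  · rw [Finset.card_eq_three]
    refine ⟨_, _, _, ?_, ?_, ?_, rfl⟩ <;> simp [Finsupp.ext_iff, Fin.forall_fin_succ, single_apply]
  · simp only [generatorExponents, Set.mem_insert_iff, Set.mem_singleton_iff, forall_eq_or_imp,
      forall_eq]
    simp only [Finset.mem_insert, Finset.mem_singleton, Finsupp.ext_iff, le_def,
      Fin.forall_fin_succ, IsEmpty.forall_iff, and_true, Finsupp.add_apply, single_apply, Fin.reduceEq,
      Fin.succ_zero_eq_one, Fin.succ_one_eq_two, ↓reduceIte, degree_eq_sum, Fin.sum_univ_three]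
    omega

lemma finrank_qpiece_three_generatorExponents :
    Module.finrank K
      (Qpiece (Ideal.span ((fun si => monomial si (1 : K)) '' generatorExponents)) 3) = 3 := by
  rw [finrank_qpiece_span_monomial
    {single 1 2 + single 2 1, single 1 1 + single 2 2, single 2 3} fun m => ?_]
  · rw [Finset.card_eq_three]
    refine ⟨_, _, _, ?_, ?_, ?_, rfl⟩ <;> simp [Finsupp.ext_iff, Fin.forall_fin_succ, single_apply]
  · simp only [generatorExponents, Set.mem_insert_iff, Set.mem_singleton_iff, forall_eq_or_imp,
      forall_eq]
    simp only [Finset.mem_insert, Finset.mem_singleton, Finsupp.ext_iff, le_def,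
      Fin.forall_fin_succ, IsEmpty.forall_iff, and_true, Finsupp.add_apply, single_apply, Fin.reduceEq,
      Fin.succ_zero_eq_one, Fin.succ_one_eq_two, ↓reduceIte, degree_eq_sum, Fin.sum_univ_three]
    omega

end GeneratorExponents

/-- For `I' = (x², xy, y³, xz², y²z², yz³, z⁴)` in `K[x,y,z]`, `z` is not a strong
Lefschetz element on `S/I'`: the class of `x` is a nonzero element of `(S/I')_1` killed
by `z²`, and since `dim (S/I')_1 = 3 = dim (S/I')_3`, multiplication by `z²` from
`(S/I')_1` to `(S/I')_3` is neither injective nor surjective. -/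
theorem stmt_11 (I' : Ideal (MvPolynomial (Fin 3) K))
    (hI : I' = Ideal.span {(X 0 : MvPolynomial (Fin 3) K) ^ 2, X 0 * X 1, X 1 ^ 3,
        X 0 * X 2 ^ 2, X 1 ^ 2 * X 2 ^ 2, X 1 * X 2 ^ 3, X 2 ^ 4}) :
    Ideal.Quotient.mk I' (X 0) ≠ 0 ∧
    Ideal.Quotient.mk I' (X 2) ^ 2 * Ideal.Quotient.mk I' (X 0) = 0 ∧
    Module.finrank K (Qpiece I' 1) = 3 ∧
    Module.finrank K (Qpiece I' 3) = 3 ∧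
    ¬ QInj I' ((X 2 : MvPolynomial (Fin 3) K) ^ 2) 1 3 ∧
    ¬ QSurj I' ((X 2 : MvPolynomial (Fin 3) K) ^ 2) 1 3 := by
  have hxz : Ideal.Quotient.mk I' (X 2) ^ 2 * Ideal.Quotient.mk I' (X 0) = 0 := by
    rw [← map_pow, ← map_mul, Ideal.Quotient.eq_zero_iff_mem, mul_comm, hI]
    exact Ideal.subset_span (by simp)
  replace hI := hI.trans span_eq_span_monomial_generatorExponents
  have hx : Ideal.Quotient.mk I' (X 0) ≠ 0 := by
    rw [Ne, Ideal.Quotient.eq_zero_iff_mem, hI, X, monomial_mem_span_monomial_iff]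
    simp [generatorExponents, Finsupp.le_def, Fin.forall_fin_succ]
  have hdim₁ : Module.finrank K (Qpiece I' 1) = 3 := hI ▸ finrank_qpiece_one_generatorExponents
  have hdim₃ : Module.finrank K (Qpiece I' 3) = 3 := hI ▸ finrank_qpiece_three_generatorExponents
  have hinj : ¬ QInj I' ((X 2 : MvPolynomial (Fin 3) K) ^ 2) 1 3 :=
    not_qInj_of_mul_eq_zero (mk_mem_qpiece (isHomogeneous_X K 0)) hx (by rwa [map_pow])
  exact ⟨hx, hxz, hdim₁, hdim₃, hinj,
    fun hsurj => hinj (qInj_of_qSurj (hdim₃.trans hdim₁.symm) hsurj)⟩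
end
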